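/- arXiv:1910.02648 — 3 statements merged into one kernel-verified Lean document; each statement's English description precedes it below -/
import Mathlib

section
/- Let K be a field of characteristic p > 3 and a, b ∈ K such that the quartic P(x) = x⁴ + a·x² + b·x - a²/12 has a root α in an extension of K with α ∉ K. If K carries a derivation with a' and b' the derivatives of a and b, then α satisfies a Riccati equation α' = q₂·α² + q₁·α + q₀ with q₀, q₁, q₂ ∈ K; i.e., under the condition c = -a²/12 on the quartic x⁴ + ax² + bx + c, its roots are differential-quadratic. -/
/-!
Write `P = x⁴ + a x² + b x - a²/12` and `Δ = 8a³ + 27b²`. Modulo `P` one has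
`(36x³ + 42ax + 27b) · P' ≡ Δ`, so for `Δ ≠ 0` the derivative `P'(α)` is invertible and
differentiating `P(α) = 0` expresses `α'` as a polynomial in `α` of degree at most 3 over `K`;
its cubic coefficient cancels precisely because `c = -a²/12`. For `Δ = 0` the quartic is
`(x - r)³ (x + 3r)` with `r ∈ K`, so it has no root outside `K`.
-/

theorem twelve_ne_zero_of_charP {R : Type*} [AddMonoidWithOne R] (p : ℕ) [hp : Fact p.Prime]
    (h3 : 3 < p) [CharP R p] : (12 : R) ≠ 0 := by
  obtain ⟨hp⟩ := hp
  rw [Ne, ← Nat.cast_ofNat, CharP.cast_eq_zero_iff R p]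
  intro h
  have := Nat.le_of_dvd (by norm_num) h
  interval_cases p <;> simp_all +decide

theorem exists_eq_neg_six_mul_sq_and_eq_eight_mul_cube {K : Type*} [Field K]
    (h12 : (12 : K) ≠ 0) {a b : K} (h : 8 * a ^ 3 + 27 * b ^ 2 = 0) :
    ∃ r, a = -6 * r ^ 2 ∧ b = 8 * r ^ 3 := by
  have h3 : (3 : K) ≠ 0 := fun h3 => h12 (by linear_combination 4 * h3)
  have h4 : (4 : K) ≠ 0 := fun h4 => h12 (by linear_combination 3 * h4)
  by_cases ha : a = 0
  · subst ha
    refine ⟨0, by ring, ?_⟩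
    have : (3 * b) ^ 2 * 3 = 0 := by linear_combination h
    simpa [h3] using this
  · refine ⟨-3 * b / (4 * a), ?_, ?_⟩
    · field_simp
      linear_combination 2 * h
    · field_simp
      linear_combination 8 * b * h

theorem eq_or_eq_neg_three_mul_of_quartic_eq_zero {L : Type*} [Field L] (h12 : (12 : L) ≠ 0)
    {r α : L}
    (h : 12 * α ^ 4 + 12 * (-6 * r ^ 2) * α ^ 2 + 12 * (8 * r ^ 3) * α - (-6 * r ^ 2) ^ 2 = 0) :
    α = r ∨ α = -3 * r := by
  have hfac : 12 * ((α - r) ^ 3 * (α + 3 * r)) = 0 := by linear_combination h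
  simpa [h12, sub_eq_zero, add_eq_zero_iff_eq_neg] using hfac

theorem Derivation.riccati_of_quartic_root {R L : Type*} [CommRing R] [Field L] [Algebra R L]
    (D : Derivation R L L) (h12 : (12 : L) ≠ 0) {a b α : L}
    (hΔ : 8 * a ^ 3 + 27 * b ^ 2 ≠ 0)
    (h : 12 * α ^ 4 + 12 * a * α ^ 2 + 12 * b * α - a ^ 2 = 0) :
    6 * (8 * a ^ 3 + 27 * b ^ 2) * D α =
      (54 * b * D a - 36 * a * D b) * α ^ 2 + (24 * a ^ 2 * D a + 54 * b * D b) * α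
        + (27 * a * b * D a - 18 * a ^ 2 * D b) := by
  have hd : 12 * (4 * α ^ 3 + 2 * a * α + b) * D α + 12 * D a * α ^ 2 + 12 * D b * α
      - 2 * a * D a = 0 := by
    have h12' : D (12 : L) = 0 := by simpa using D.map_natCast 12
    have hD := congrArg D h
    simp only [map_sub, map_add, leibniz, leibniz_pow, Nat.add_one_sub_one, smul_eq_mul,
      nsmul_eq_mul, Nat.cast_ofNat, h12', mul_zero, add_zero, pow_one, map_zero] at hD
    linear_combination hD
  have hbezout : (36 * α ^ 3 + 42 * a * α + 27 * b) * (4 * α ^ 3 + 2 * a * α + b)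
      = 8 * a ^ 3 + 27 * b ^ 2 := by
    linear_combination (12 * α ^ 2 + 8 * a) * h
  have hP' : 4 * α ^ 3 + 2 * a * α + b ≠ 0 := by
    rintro h0
    rw [h0, mul_zero] at hbezout
    exact hΔ hbezout.symm
  have key : 12 * (4 * α ^ 3 + 2 * a * α + b) * (6 * (8 * a ^ 3 + 27 * b ^ 2) * D α -
      ((54 * b * D a - 36 * a * D b) * α ^ 2 + (24 * a ^ 2 * D a + 54 * b * D b) * α
        + (27 * a * b * D a - 18 * a ^ 2 * D b))) = 0 := by
    linear_combination 6 * (8 * a ^ 3 + 27 * b ^ 2) * hd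
      - ((216 * b * D a - 144 * a * D b) * α + (96 * a ^ 2 * D a + 216 * b * D b)) * h
  simpa [sub_eq_zero, h12, hP'] using key

theorem exists_eq_quadratic_of_algebraMap_mul_eq {K L : Type*} [Field K] [Field L] [Algebra K L]
    {c q₀ q₁ q₂ : K} (hc : c ≠ 0) {x α : L}
    (h : algebraMap K L c * x =
      algebraMap K L q₂ * α ^ 2 + algebraMap K L q₁ * α + algebraMap K L q₀) :
    ∃ q₀ q₁ q₂ : K, x = algebraMap K L q₂ * α ^ 2 + algebraMap K L q₁ * α + algebraMap K L q₀ := by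
  refine ⟨q₀ / c, q₁ / c, q₂ / c, ?_⟩
  have hc' : algebraMap K L c ≠ 0 := by simpa using hc
  simp only [map_div₀]
  field_simp
  linear_combination h

/-- Under the condition c = -a²/12, a root of the quartic x⁴ + ax² + bx + c
is differential-quadratic. -/
theorem stmt_6 (K L : Type*) [Field K] [Field L] [Algebra K L]
    (p : ℕ) [Fact p.Prime] (hp : 3 < p) [CharP L p]
    (D : Derivation ℤ L L)
    (hD : ∀ k : K, ∃ k' : K, D (algebraMap K L k) = algebraMap K L k')
    (a b : K) (α : L) (hα : α ∉ Set.range (algebraMap K L))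
    (hroot : α ^ 4 + algebraMap K L a * α ^ 2 + algebraMap K L b * α
        - algebraMap K L (a ^ 2 / 12) = 0) :
    ∃ q₀ q₁ q₂ : K,
      D α = algebraMap K L q₂ * α ^ 2 + algebraMap K L q₁ * α + algebraMap K L q₀ := by
  have h12 : (12 : L) ≠ 0 := twelve_ne_zero_of_charP p hp
  have h12K : (12 : K) ≠ 0 := fun h => h12 (by rw [← map_ofNat (algebraMap K L) 12, h, map_zero])
  have hroot₁₂ : 12 * α ^ 4 + 12 * algebraMap K L a * α ^ 2 + 12 * algebraMap K L b * α
      - algebraMap K L a ^ 2 = 0 := by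
    rw [map_div₀, map_pow, map_ofNat] at hroot
    field_simp at hroot
    linear_combination hroot
  by_cases hΔ : 8 * a ^ 3 + 27 * b ^ 2 = 0
  · obtain ⟨r, rfl, rfl⟩ := exists_eq_neg_six_mul_sq_and_eq_eight_mul_cube h12K hΔ
    simp only [map_mul, map_neg, map_pow, map_ofNat] at hroot₁₂
    rcases eq_or_eq_neg_three_mul_of_quartic_eq_zero h12 hroot₁₂ with h | h
    · exact absurd ⟨r, h.symm⟩ hα
    · exact absurd ⟨-3 * r, by rw [h, map_mul, map_neg, map_ofNat]⟩ hα
  · obtain ⟨a', ha'⟩ := hD a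
    obtain ⟨b', hb'⟩ := hD b
    have hΔL : 8 * algebraMap K L a ^ 3 + 27 * algebraMap K L b ^ 2 ≠ 0 := by
      simpa [map_ofNat] using (algebraMap K L).injective.ne hΔ
    have key := D.riccati_of_quartic_root h12 hΔL hroot₁₂
    rw [ha', hb'] at key
    have h6K : (6 : K) ≠ 0 := fun h => h12K (by linear_combination 2 * h)
    refine exists_eq_quadratic_of_algebraMap_mul_eq (mul_ne_zero h6K hΔ)
      (q₂ := 54 * b * a' - 36 * a * b') (q₁ := 24 * a ^ 2 * a' + 54 * b * b')
      (q₀ := 27 * a * b * a' - 18 * a ^ 2 * b') ?_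
    simpa [map_ofNat] using key
end

section
/- Let K = F_q(T) with p > 5 and let a, b, c ∈ K satisfy conditions (C₁): 18a³ + 325bc = 0 and (C₂): 5b'c = 4c'b, where ' denotes d/dT. If α is a root of P(x) = x⁵ + a·x² + b·x + c in an extension of K (with the discriminant of P nonzero), then α satisfies a Riccati equation: writing α' = b₄α⁴ + b₃α³ + b₂α² + b₁α + b₀ with bᵢ ∈ K (obtained by implicit differentiation), one has b₄ = b₃ = 0 (indeed also b₂ = b₀ = 0), so α' = b₁·α. -/
open Polynomial

/-! The quintic `x⁵ + a x² + b x + c` is weighted homogeneous when `x, a, b, c` get weights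
`1, 3, 4, 5`. Conditions (C₁), (C₂) and the derivative of (C₁) force `(a', b', c') = β (3a, 4b, 5c)`
for a single `β ∈ K` (namely `β = c'/5c`, or `β = b'/4b` when `c = 0`), so the derivation acts on the
coefficients as `β` times the Euler operator. Differentiating `P(α) = 0` then gives
`(α' - βα) P'(α) = 0`, and `P'(α) ≠ 0` because `P` is separable. -/

lemma CharP.natCast_ne_zero_of_lt {R : Type*} [AddMonoidWithOne R] (p : ℕ) [CharP R p]
    {n : ℕ} (hn : n ≠ 0) (hnp : n < p) : (n : R) ≠ 0 :=
  fun h => hn (Nat.eq_zero_of_dvd_of_lt ((CharP.cast_eq_zero_iff R p n).mp h) hnp)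

lemma exists_eq_euler_scaling_of_C1_C2 {K : Type*} [Field K]
    (h2 : (2 : K) ≠ 0) (h3 : (3 : K) ≠ 0) (h5 : (5 : K) ≠ 0) {a b c a' b' c' : K}
    (hC1 : 18 * a ^ 3 + 325 * b * c = 0) (hC2 : 5 * b' * c = 4 * c' * b)
    (hC1' : 54 * a ^ 2 * a' + 325 * (b' * c + b * c') = 0)
    (ha : a = 0 → a' = 0) (hb : b = 0 → b' = 0) (hc : c = 0 → c' = 0) :
    ∃ β : K, a' = 3 * β * a ∧ b' = 4 * β * b ∧ c' = 5 * β * c := by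
  by_cases hc0 : c = 0
  · have ha0 : a = 0 := by
      have : (18 : K) * a ^ 3 = 0 := by linear_combination hC1 - 325 * b * hc0
      simpa [show (18 : K) = 2 * 3 * 3 by norm_num, h2, h3] using this
    refine ⟨b' / (4 * b), by simp [ha0, ha ha0], ?_, by simp [hc0, hc hc0]⟩
    by_cases hb0 : b = 0
    · simp [hb0, hb hb0]
    · have h4 : (4 : K) ≠ 0 := by simpa [show (4 : K) = 2 * 2 by norm_num] using h2
      field_simp
  · refine ⟨c' / (5 * c), ?_, by field_simp; linear_combination hC2, by field_simp⟩
    by_cases ha0 : a = 0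
    · simp [ha0, ha ha0]
    -- (C₁) and (C₂) eliminate b and b' from the derivative of (C₁)
    have key : 54 * a ^ 2 * (5 * c * a' - 3 * a * c') = 0 := by
      linear_combination 5 * c * hC1' - 325 * c * hC2 - 9 * c' * hC1
    have : 5 * c * a' - 3 * a * c' = 0 := by
      simpa [show (54 : K) = 2 * 3 * 3 * 3 by norm_num, h2, h3, ha0] using key
    field_simp
    linear_combination this

lemma aeval_derivative_quintic {K L : Type*} [CommRing K] [CommRing L] [Algebra K L]
    (a b c : K) (α : L) :
    aeval α (derivative (X ^ 5 + C a * X ^ 2 + C b * X + C c : K[X]))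
      = 5 * α ^ 4 + 2 * algebraMap K L a * α + algebraMap K L b := by
  simp only [derivative_X_pow, derivative_C_mul, derivative_X, derivative_C,
    map_add, map_mul, map_pow, map_one, map_zero, aeval_X, aeval_C, map_natCast]
  push_cast
  ring

section
variable {R L : Type*} [CommRing R] [CommRing L] [Algebra R L] (D : Derivation R L L)

lemma Derivation.apply_C1_form (A B C : L) :
    D (18 * A ^ 3 + 325 * B * C) = 54 * A ^ 2 * D A + 325 * (D B * C + B * D C) := by
  rw [show (18 : L) = (18 : ℕ) by norm_cast, show (325 : L) = (325 : ℕ) by norm_cast]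
  simp only [map_add, Derivation.leibniz, Derivation.leibniz_pow, Derivation.map_natCast,
    smul_eq_mul, nsmul_eq_mul]
  push_cast
  ring

lemma Derivation.apply_eq_mul_of_quintic_root [IsDomain L] {A B C β α : L}
    (hA : D A = 3 * β * A) (hB : D B = 4 * β * B) (hC : D C = 5 * β * C)
    (hroot : α ^ 5 + A * α ^ 2 + B * α + C = 0) (hsimple : 5 * α ^ 4 + 2 * A * α + B ≠ 0) :
    D α = β * α := by
  have hDroot : D α * (5 * α ^ 4 + 2 * A * α + B) + (D A * α ^ 2 + D B * α + D C) = 0 := by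
    have := congrArg D hroot
    simp only [map_add, map_zero, Derivation.leibniz, Derivation.leibniz_pow, smul_eq_mul,
      nsmul_eq_mul] at this
    push_cast at this
    linear_combination this
  have : (D α - β * α) * (5 * α ^ 4 + 2 * A * α + B) = 0 := by
    linear_combination hDroot - 5 * β * hroot - α ^ 2 * hA - α * hB - hC
  exact sub_eq_zero.mp ((mul_eq_zero.mp this).resolve_right hsimple)

end

theorem stmt_7_general (K L : Type*) [Field K] [Field L] [Algebra K L]
    (p : ℕ) (hp : 5 < p) [CharP L p]
    (D : Derivation ℤ L L) (a b c a' b' c' : K)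
    (hDa : D (algebraMap K L a) = algebraMap K L a')
    (hDb : D (algebraMap K L b) = algebraMap K L b')
    (hDc : D (algebraMap K L c) = algebraMap K L c')
    (hC1 : 18 * a ^ 3 + 325 * b * c = 0) (hC2 : 5 * b' * c = 4 * c' * b)
    (hsep : (X ^ 5 + C a * X ^ 2 + C b * X + C c : K[X]).Separable)
    (α : L)
    (hroot : α ^ 5 + algebraMap K L a * α ^ 2 + algebraMap K L b * α
        + algebraMap K L c = 0) :
    ∃ b₁ : K, D α = algebraMap K L b₁ * α := by
  have : CharP K p := (algebraMap K L).charP (algebraMap K L).injective p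
  have h2 : (2 : K) ≠ 0 := by exact_mod_cast CharP.natCast_ne_zero_of_lt p two_ne_zero (by omega)
  have h3 : (3 : K) ≠ 0 := by exact_mod_cast CharP.natCast_ne_zero_of_lt p three_ne_zero (by omega)
  have h5 : (5 : K) ≠ 0 := by exact_mod_cast CharP.natCast_ne_zero_of_lt p (by norm_num) (by omega)
  have hzero {x x' : K} (hx : D (algebraMap K L x) = algebraMap K L x') : x = 0 → x' = 0 := by
    rintro rfl
    simpa using hx.symm
  have hC1' : 54 * a ^ 2 * a' + 325 * (b' * c + b * c') = 0 := by
    have := D.apply_C1_form (algebraMap K L a) (algebraMap K L b) (algebraMap K L c)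
    simp only [← map_ofNat (algebraMap K L), ← map_pow, ← map_mul, ← map_add, hC1, map_zero,
      hDa, hDb, hDc] at this
    exact (algebraMap K L).injective (by simpa using this.symm)
  obtain ⟨β, ha', hb', hc'⟩ :=
    exists_eq_euler_scaling_of_C1_C2 h2 h3 h5 hC1 hC2 hC1' (hzero hDa) (hzero hDb) (hzero hDc)
  refine ⟨β, D.apply_eq_mul_of_quintic_root ?_ ?_ ?_ hroot ?_⟩
  · rw [hDa, ha', map_mul, map_mul, map_ofNat]
  · rw [hDb, hb', map_mul, map_mul, map_ofNat]
  · rw [hDc, hc', map_mul, map_mul, map_ofNat]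
  · rw [← aeval_derivative_quintic]
    exact hsep.aeval_derivative_ne_zero (by simpa using hroot)

/-- Under conditions (C₁): 18a³ + 325bc = 0 and (C₂): 5b'c = 4c'b, a root of the
separable quintic x⁵ + ax² + bx + c satisfies the Riccati equation α' = b₁·α. -/
theorem stmt_7 (K L : Type*) [Field K] [Field L] [Algebra K L]
    (p : ℕ) [Fact p.Prime] (hp : 5 < p) [CharP L p]
    (D : Derivation ℤ L L) (a b c a' b' c' : K)
    (hDa : D (algebraMap K L a) = algebraMap K L a')
    (hDb : D (algebraMap K L b) = algebraMap K L b')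
    (hDc : D (algebraMap K L c) = algebraMap K L c')
    (hD : ∀ k : K, ∃ k' : K, D (algebraMap K L k) = algebraMap K L k')
    (hC1 : 18 * a ^ 3 + 325 * b * c = 0) (hC2 : 5 * b' * c = 4 * c' * b)
    (hsep : (X ^ 5 + C a * X ^ 2 + C b * X + C c : K[X]).Separable)
    (α : L)
    (hroot : α ^ 5 + algebraMap K L a * α ^ 2 + algebraMap K L b * α
        + algebraMap K L c = 0) :
    ∃ b₁ : K, D α = algebraMap K L b₁ * α :=
  stmt_7_general K L p hp D a b c a' b' c' hDa hDb hDc hC1 hC2 hsep α hroot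
end

section
/- Let p = 11. For every a ∈ F_p*, with b = cr(a⁴·cr(u)), c = -18a³/(325b) as defined via u = 2(18/325)⁴ and cr the inverse cube map on F_p, the quintic P(x) = x⁵ + a·x² + b·x + c divides some projective polynomial H(x) = x¹² + v·x¹¹ + v·x + z over F_11 with z ≠ v² ; in particular every root of P in an algebraic closure of F_11 is hyperquadratic of order 1 over F_11. -/
/-!
Let `t` be the cube root of `a`. Then `b = 7 t⁴` and `c = 9 t⁵`, so `P` is obtained from
`P₁ = x⁵ + x² + 7x + 9` by scaling its roots by `t`. Scaling the roots of the projective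
polynomial `x¹² + 7x¹¹ + 7x + 2`, which `P₁` divides, multiplies the coefficient of `x¹¹` by `t`
and that of `x` by `t¹¹ = t`, so it stays of the shape `x¹² + v x¹¹ + v x + z` with
`z = 2t² ≠ 49t² = v²`.
-/

open Polynomial

instance : Fact (Nat.Prime 11) := ⟨by norm_num⟩

section ScaleRoots

variable {R : Type*} [CommRing R] [Nontrivial R]

lemma scaleRoots_quintic (a b c s : R) :
    (X ^ 5 + C a * X ^ 2 + C b * X + C c).scaleRoots s =
      X ^ 5 + C (s ^ 3 * a) * X ^ 2 + C (s ^ 4 * b) * X + C (s ^ 5 * c) := by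
  have hdeg : (X ^ 5 + C a * X ^ 2 + C b * X + C c).natDegree = 5 := by compute_degree!
  ext n
  simp only [coeff_scaleRoots, hdeg, coeff_add, coeff_X_pow, coeff_C_mul, coeff_X, coeff_C]
  rcases n with _ | _ | _ | _ | _ | _ | n <;> simp <;> ring

lemma scaleRoots_projective (v w z s : R) :
    (X ^ 12 + C v * X ^ 11 + C w * X + C z).scaleRoots s =
      X ^ 12 + C (s * v) * X ^ 11 + C (s ^ 11 * w) * X + C (s ^ 12 * z) := by
  have hdeg : (X ^ 12 + C v * X ^ 11 + C w * X + C z).natDegree = 12 := by compute_degree!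
  ext n
  simp only [coeff_scaleRoots, hdeg, coeff_add, coeff_X_pow, coeff_C_mul, coeff_X, coeff_C]
  rcases n with _ | _ | _ | _ | _ | _ | _ | _ | _ | _ | _ | _ | _ | n <;> simp <;> ring

end ScaleRoots

lemma quintic_dvd_projective_base :
    (X ^ 5 + C 1 * X ^ 2 + C 7 * X + C 9 : (ZMod 11)[X]) ∣
      X ^ 12 + C 7 * X ^ 11 + C 7 * X + C 2 := by
  have h11 : (11 : (ZMod 11)[X]) = 0 := by exact_mod_cast CharP.cast_eq_zero (ZMod 11)[X] 11
  refine ⟨X ^ 7 + 7 * X ^ 6 + 10 * X ^ 4 + 8 * X ^ 3 + 8 * X ^ 2 + 4 * X + 10, ?_⟩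
  simp only [map_ofNat, map_one]
  linear_combination (-X ^ 9 - 2 * X ^ 8 - 6 * X ^ 7 - 7 * X ^ 6 - 8 * X ^ 5 - 14 * X ^ 4
    - 12 * X ^ 3 - 10 * X ^ 2 - 9 * X - 8) * h11

lemma ZMod.cube_injective_eleven : Function.Injective fun x : ZMod 11 => x ^ 3 := by
  unfold Function.Injective
  decide

theorem stmt_15 (cr : ZMod 11 → ZMod 11) (hcr : ∀ x, (cr x) ^ 3 = x)
    (u : ZMod 11) (hu : u = 2 * (18 / 325) ^ 4)
    (a : ZMod 11) (ha : a ≠ 0)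
    (b c : ZMod 11) (hb : b = cr (a ^ 4 * cr u)) (hc : c = -18 * a ^ 3 / (325 * b)) :
    ∃ v z : ZMod 11, z ≠ v ^ 2 ∧
      (X ^ 5 + C a * X ^ 2 + C b * X + C c : (ZMod 11)[X]) ∣
        (X ^ 12 + C v * X ^ 11 + C v * X + C z) ∧
      ∀ α : AlgebraicClosure (ZMod 11),
        aeval α (X ^ 5 + C a * X ^ 2 + C b * X + C c : (ZMod 11)[X]) = 0 →
        α ^ 12 + algebraMap (ZMod 11) _ v * α ^ 11
          + algebraMap (ZMod 11) _ v * α + algebraMap (ZMod 11) _ z = 0 := by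
  set t := cr a
  have ht3 : t ^ 3 = a := hcr a
  have ht0 : t ≠ 0 := by rintro ht; exact ha (by rw [← ht3, ht, zero_pow three_ne_zero])
  have hu8 : u = 2 ^ 3 := by
    have h325 : (325 : ZMod 11)⁻¹ = 2 := ZMod.inv_eq_of_mul_eq_one 11 _ _ (by decide)
    rw [hu, div_eq_mul_inv, h325]
    decide
  have hcru : cr u = 2 := ZMod.cube_injective_eleven (by dsimp only; rw [hcr, hu8])
  have hb' : b = t ^ 4 * 7 := ZMod.cube_injective_eleven <| by
    dsimp only
    rw [hb, hcr, hcru, ← ht3]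
    linear_combination t ^ 12 * (by decide : (2 : ZMod 11) = 7 ^ 3)
  have hc' : c = t ^ 5 * 9 := by
    rw [hc, hb', ← ht3,
      div_eq_iff (mul_ne_zero (by decide) (mul_ne_zero (pow_ne_zero 4 ht0) (by decide)))]
    linear_combination t ^ 9 * (by decide : (-18 : ZMod 11) = 9 * (325 * 7))
  have ht12 : t ^ 12 = t ^ 2 := by rw [pow_succ, ZMod.pow_card, sq]
  have hdvd := scaleRoots_dvd _ _ (r := t) quintic_dvd_projective_base
  rw [scaleRoots_quintic, scaleRoots_projective, mul_one, ht3, ← hb', ← hc', ZMod.pow_card,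
    ht12] at hdvd
  refine ⟨t * 7, t ^ 2 * 2, ?_, hdvd, fun α hα => ?_⟩
  · rw [mul_pow]
    exact (mul_right_injective₀ (pow_ne_zero 2 ht0)).ne (by decide)
  · simpa using aeval_eq_zero_of_dvd_aeval_eq_zero hdvd hα
end
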